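/- For every integer n ≥ 0 and every nonzero real t, integration by parts yields 𝓘ₙ(t) = (1/(it)) · (𝓘_{n+1}(t) − Heₙ(0)). -/

import Mathlib

open MeasureTheory

/-- Probabilists' Hermite polynomial `Heₙ(x) = (−1)ⁿ e^{x²/2} dⁿ/dxⁿ e^{−x²/2}`. -/
noncomputable def He (n : ℕ) (x : ℝ) : ℝ :=
  (-1) ^ n * Real.exp (x ^ 2 / 2) * iteratedDeriv n (fun y => Real.exp (-(y ^ 2) / 2)) x

/-- `𝓘ₙ(t) = ∫₀^∞ Heₙ(ω) e^{−ω²/2} e^{itω} dω`. -/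
noncomputable def calI (n : ℕ) (t : ℝ) : ℂ :=
  ∫ ω in Set.Ioi (0 : ℝ),
    (He n ω : ℂ) * Complex.exp (-(ω : ℂ) ^ 2 / 2) * Complex.exp (Complex.I * (t : ℂ) * (ω : ℂ))

/-! Integrate by parts against `e^{itω}` on `(0, ∞)`: by the Rodrigues formula the derivative of
`Heₙ(ω) e^{−ω²/2}` is `−He_{n+1}(ω) e^{−ω²/2}`; both are polynomials times a Gaussian, hence
integrable, and a function integrable together with its derivative tends to `0` at `∞`, so the only
boundary term is the value `Heₙ(0)` at `ω = 0`. -/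

open MeasureTheory Set Filter Topology Complex

lemma hasDerivAt_cexp_I_mul (t x : ℝ) :
    HasDerivAt (fun y : ℝ => cexp (I * t * y)) (I * t * cexp (I * t * x)) x := by
  simpa [mul_comm] using ((hasDerivAt_id x).ofReal_comp.const_mul (I * t)).cexp

lemma norm_cexp_I_mul (t x : ℝ) : ‖cexp (I * t * x)‖ = 1 := by
  rw [mul_assoc, ← ofReal_mul, norm_exp_I_mul_ofReal]

lemma MeasureTheory.Integrable.mul_cexp_I_mul {f : ℝ → ℂ} {μ : Measure ℝ} (hf : Integrable f μ)
    (t : ℝ) : Integrable (fun x => f x * cexp (I * t * x)) μ :=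
  hf.mul_bdd (by fun_prop) (c := 1) (ae_of_all _ fun x => (norm_cexp_I_mul t x).le)

theorem integral_Ioi_mul_cexp_I_mul {f f' : ℝ → ℂ} {a : ℝ} (t : ℝ)
    (hcont : ContinuousWithinAt f (Ici a) a) (hderiv : ∀ x ∈ Ioi a, HasDerivAt f (f' x) x)
    (hf : IntegrableOn f (Ioi a)) (hf' : IntegrableOn f' (Ioi a)) :
    I * t * ∫ x in Ioi a, f x * cexp (I * t * x) =
      -(f a * cexp (I * t * a)) - ∫ x in Ioi a, f' x * cexp (I * t * x) := by
  set e : ℝ → ℂ := fun x => cexp (I * t * x)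
  have he : ∀ x, HasDerivAt e (I * t * e x) x := hasDerivAt_cexp_I_mul t
  have hfe' : IntegrableOn (f * fun x => I * t * e x) (Ioi a) := by
    refine ((hf.mul_cexp_I_mul t).const_mul (I * t)).congr (ae_of_all _ fun x => ?_)
    simp only [Pi.mul_apply, e]
    ring
  have hf'e : IntegrableOn (f' * e) (Ioi a) := hf'.mul_cexp_I_mul t
  have h_zero : Tendsto (f * e) (𝓝[>] a) (𝓝 (f a * e a)) :=
    ((hcont.mono Ioi_subset_Ici_self).mul (he a).continuousAt.continuousWithinAt).tendsto
  have h_infty : Tendsto (f * e) atTop (𝓝 0) :=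
    tendsto_zero_of_hasDerivAt_of_integrableOn_Ioi
      (fun x hx => (hderiv x hx).mul (he x)) (hf'e.add hfe') (hf.mul_cexp_I_mul t)
  rw [← integral_const_mul]
  simpa [mul_left_comm] using integral_Ioi_mul_deriv_eq_deriv_mul
    hderiv (fun x _ => he x) hfe' hf'e h_zero h_infty

open Polynomial

lemma He_eq_aeval_hermite (n : ℕ) (x : ℝ) : He n x = aeval x (hermite n) := by
  have hgauss : (fun y : ℝ => Real.exp (-(y ^ 2) / 2)) = fun y => Real.exp (-(y ^ 2 / 2)) := by
    simp only [neg_div]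
  rw [hermite_eq_deriv_gaussian', He, iteratedDeriv_eq_iterate, hgauss]
  ring

lemma hasDerivAt_He_mul_gaussian (n : ℕ) (x : ℝ) :
    HasDerivAt (fun y => He n y * Real.exp (-(y ^ 2) / 2))
      (-(He (n + 1) x * Real.exp (-(x ^ 2) / 2))) x := by
  simp only [He_eq_aeval_hermite, hermite_succ, map_sub, map_mul, aeval_X]
  have hgauss :
      HasDerivAt (fun y : ℝ => Real.exp (-(y ^ 2) / 2)) (-x * Real.exp (-(x ^ 2) / 2)) x := by
    simpa [neg_div, mul_comm] using ((hasDerivAt_pow 2 x).neg.div_const 2).exp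
  exact (((hermite n).hasDerivAt_aeval x).fun_mul hgauss).congr_deriv (by ring)

lemma integrableOn_aeval_mul_gaussian {R : Type*} [CommSemiring R] [Algebra R ℝ] (p : R[X]) :
    IntegrableOn (fun x : ℝ => aeval x p * Real.exp (-(x ^ 2) / 2)) (Ioi 0) := by
  induction p using Polynomial.induction_on' with
  | add p q hp hq =>
    simp only [map_add, add_mul]
    exact hp.add hq
  | monomial k a =>
    refine IntegrableOn.congr_fun ((integrableOn_rpow_mul_exp_neg_mul_sq (b := 1 / 2) (by norm_num)
      (s := k) (by linarith [k.cast_nonneg (α := ℝ)])).const_mul (algebraMap R ℝ a))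
      (fun x _ => ?_) measurableSet_Ioi
    simp only [aeval_monomial, Real.rpow_natCast]
    ring_nf

lemma integrableOn_He_mul_gaussian (n : ℕ) :
    IntegrableOn (fun x : ℝ => He n x * Real.exp (-(x ^ 2) / 2)) (Ioi 0) := by
  simpa only [He_eq_aeval_hermite] using integrableOn_aeval_mul_gaussian (hermite n)

lemma calI_eq_integral_ofReal (n : ℕ) (t : ℝ) :
    calI n t = ∫ x in Ioi 0, ((He n x * Real.exp (-(x ^ 2) / 2) : ℝ) : ℂ) * cexp (I * t * x) := by
  simp only [calI, ofReal_mul, ofReal_exp]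
  push_cast
  rfl

theorem stmt_2 (n : ℕ) (t : ℝ) (ht : t ≠ 0) :
    calI n t = 1 / (Complex.I * (t : ℂ)) * (calI (n + 1) t - (He n 0 : ℂ)) := by
  have hderiv (x : ℝ) : HasDerivAt (fun y : ℝ => ((He n y * Real.exp (-(y ^ 2) / 2) : ℝ) : ℂ))
      (-((He (n + 1) x * Real.exp (-(x ^ 2) / 2) : ℝ) : ℂ)) x := by
    simpa using (hasDerivAt_He_mul_gaussian n x).ofReal_comp
  have key := integral_Ioi_mul_cexp_I_mul t (hderiv 0).continuousAt.continuousWithinAt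
    (fun x _ => hderiv x) (integrableOn_He_mul_gaussian n).ofReal
    (integrableOn_He_mul_gaussian (n + 1)).ofReal.neg
  have hboundary :
      ((He n 0 * Real.exp (-(0 ^ 2) / 2) : ℝ) : ℂ) * cexp (I * t * (0 : ℝ)) = He n 0 := by
    simp
  simp only [neg_mul, integral_neg, ← calI_eq_integral_ofReal, hboundary] at key
  have hIt : I * t ≠ 0 := mul_ne_zero I_ne_zero (ofReal_ne_zero.mpr ht)
  rw [one_div, eq_inv_mul_iff_mul_eq₀ hIt]
  linear_combination key
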